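/- If θ > κ > σ are regular cardinals with σ infinite (so κ is uncountable), then there exist a stationary set S ⊆ {δ < θ : cf(δ) = σ} and a sequence ⟨C_δ : δ ∈ S⟩, where each C_δ is an unbounded subset of δ of order type < κ, such that for every club E of θ there is δ ∈ S with C_δ ⊆ E. -/

import Mathlib

open Cardinal Set Ordinal

noncomputable section

/-- The order type of a set of ordinals (meaningful for bounded sets):
the unique ordinal `α` such that `s` is order-isomorphic to `Set.Iio α`. -/
def otp (s : Set Ordinal.{0}) : Ordinal.{0} :=
  sInf {α : Ordinal | Nonempty (↥s ≃o ↥(Set.Iio α))}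

/-- `acc C`: the accumulation points of a set of ordinals,
`{β : 0 < β = sup (C ∩ β)}`. -/
def ordAcc (C : Set Ordinal.{0}) : Set Ordinal.{0} :=
  {β | 0 < β ∧ β = sSup (C ∩ Set.Iio β)}

/-- `nacc C`: the non-accumulation points of `C`, `{β ∈ C : β > sup (C ∩ β)}`. -/
def ordNacc (C : Set Ordinal.{0}) : Set Ordinal.{0} :=
  {β | β ∈ C ∧ sSup (C ∩ Set.Iio β) < β}

/-- `C` is a closed subset of the ordinal `α`: every accumulation point of `C`
below `α` belongs to `C`. -/
def closedBelow (C : Set Ordinal.{0}) (α : Ordinal.{0}) : Prop :=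
  ∀ β < α, β ∈ ordAcc C → β ∈ C

/-- `C` is a club (closed unbounded subset) of the (limit) ordinal `α`. -/
def isClub (C : Set Ordinal.{0}) (α : Ordinal.{0}) : Prop :=
  C ⊆ Set.Iio α ∧ (∀ β < α, ∃ γ ∈ C, β ≤ γ) ∧ closedBelow C α

/-- `S` is a stationary subset of the ordinal `α`: it meets every club of `α`. -/
def isStationary (S : Set Ordinal.{0}) (α : Ordinal.{0}) : Prop :=
  ∀ C, isClub C α → (S ∩ C).Nonempty

/-- `A ∈ I[λ]`: `A` is a set of ordinals `< λ`, the set of `δ ∈ A` with `δ = cf δ`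
is non-stationary, and there is a sequence `⟨P_α : α < λ⟩` of families of fewer
than `λ` subsets of `α` such that every limit `α ∈ A` with `cf α < α` has an
unbounded subset `x ⊆ α` of order type `< α` all of whose proper initial
segments appear in `⋃_{γ < α} P_γ`. -/
def approachable (lam : Cardinal.{0}) (A : Set Ordinal.{0}) : Prop :=
  A ⊆ Set.Iio lam.ord ∧
  ¬ isStationary {δ | δ ∈ A ∧ δ.cof.ord = δ} lam.ord ∧
  ∃ P : Ordinal.{0} → Set (Set Ordinal.{0}),
    (∀ α < lam.ord, (∀ x ∈ P α, x ⊆ Set.Iio α) ∧ #(P α) < Cardinal.lift.{1} lam) ∧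
    ∀ α ∈ A, Order.IsSuccLimit α → α.cof.ord < α →
      ∃ x : Set Ordinal, x ⊆ Set.Iio α ∧ sSup x = α ∧ otp x < α ∧
        ∀ ζ < α, x ∩ Set.Iio ζ ∈ ⋃ γ ∈ Set.Iio α, P γ

lemma sSup_le_sSup' {s t : Set Ordinal.{0}} (h : s ⊆ t) (ht : BddAbove t) :
    sSup s ≤ sSup t := by
  rcases s.eq_empty_or_nonempty with rfl | hs
  · simp only [csSup_empty]; exact zero_le
  · exact csSup_le_csSup ht hs h

/-- sup of a nonempty subset of a club, below the top, belongs to the club -/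
lemma sSup_mem_club {E : Set Ordinal.{0}} {t : Ordinal.{0}} (hE : isClub E t)
    {s : Set Ordinal.{0}} (hsub : s ⊆ E) (hne : s.Nonempty) (hlt : sSup s < t) :
    sSup s ∈ E := by
  have hbdd : BddAbove s := ⟨sSup s, fun x hx => le_csSup ?b hx⟩
  case b => exact @Ordinal.bddAbove_of_small s (small_subset (hsub.trans hE.1))
  by_cases hmem : sSup s ∈ s
  · exact hsub hmem
  · -- sSup is an accumulation point of E
    have hpos : 0 < sSup s := by
      rcases hne with ⟨x, hx⟩
      rcases (zero_le (a := sSup s)).lt_or_eq with h | h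
      · exact h
      · exfalso; apply hmem
        have h2 := le_csSup hbdd hx
        rw [← h] at h2 ⊢
        rwa [nonpos_iff_eq_zero.1 h2] at hx
    apply hE.2.2 _ hlt
    refine ⟨hpos, le_antisymm ?_ ?_⟩
    · -- sSup s ≤ sSup (E ∩ Iio (sSup s))
      have hs' : s ⊆ E ∩ Set.Iio (sSup s) := by
        intro x hx
        exact ⟨hsub hx, lt_of_le_of_ne (le_csSup hbdd hx) (fun h => hmem (h ▸ hx))⟩
      exact sSup_le_sSup' hs' ⟨sSup s, fun x hx => hx.2.le⟩
    · exact csSup_le' (fun x hx => hx.2.le)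

/-- recursively defined increasing chain -/
def chain (N : Ordinal.{0} → Ordinal.{0}) (b : Ordinal.{0}) : Ordinal.{0} → Ordinal.{0} :=
  lt_wf.fix (fun i rec => b ⊔ sSup {x | ∃ j, ∃ h : j < i, x = N (rec j h)})

lemma chain_eq (N : Ordinal.{0} → Ordinal.{0}) (b i) :
    chain N b i = b ⊔ sSup ((fun j => N (chain N b j)) '' Set.Iio i) := by
  have := lt_wf.fix_eq (C := fun _ => Ordinal.{0})
    (fun i rec => b ⊔ sSup {x | ∃ j, ∃ h : j < i, x = N (rec j h)}) i
  rw [chain, this]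
  congr 1
  congr 1
  ext x
  simp only [Set.mem_setOf_eq, Set.mem_image, Set.mem_Iio]
  constructor
  · rintro ⟨j, hj, rfl⟩; exact ⟨j, hj, rfl⟩
  · rintro ⟨j, hj, rfl⟩; exact ⟨j, hj, rfl⟩

section chainprops
variable {N : Ordinal.{0} → Ordinal.{0}} {b : Ordinal.{0}}

lemma small_image_Iio (f : Ordinal.{0} → Ordinal.{0}) (i : Ordinal.{0}) :
    Small.{0} ↥(f '' Set.Iio i) := by infer_instance

lemma bddAbove_image_Iio (f : Ordinal.{0} → Ordinal.{0}) (i : Ordinal.{0}) :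
    BddAbove (f '' Set.Iio i) := @Ordinal.bddAbove_of_small _ (small_image_Iio f i)

lemma le_chain_self : ∀ i, b ≤ chain N b i := fun i => by
  rw [chain_eq]; exact le_sup_left

lemma chain_step {j i : Ordinal.{0}} (h : j < i) :
    N (chain N b j) ≤ chain N b i := by
  rw [chain_eq N b i]
  exact le_sup_of_le_right (le_csSup (bddAbove_image_Iio _ i) ⟨j, h, rfl⟩)

lemma chain_strictMono (hN : ∀ γ, γ < N γ) : StrictMono (chain N b) := fun j i h =>
  lt_of_lt_of_le (hN _) (chain_step h)

lemma chain_isNormal (hN : ∀ γ, γ < N γ) : Order.IsNormal (chain N b) := by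
  rw [Order.isNormal_iff]
  constructor
  · exact chain_strictMono hN
  · intro o ho a
    · intro h
      rw [chain_eq]
      refine sup_le ?_ (csSup_le' ?_)
      · exact le_trans (le_chain_self 0) (h 0 ho.pos)
      · rintro x ⟨j, hj, rfl⟩
        have hj' : j + 1 < o := ho.succ_lt hj
        show N (chain N b j) ≤ a
        exact le_trans (chain_step (lt_add_one j)) (h _ hj')

lemma chain_limit_le_sSup {o : Ordinal.{0}} (ho : Order.IsSuccLimit o) :
    chain N b o ≤ sSup (chain N b '' Set.Iio o) := by
  rw [chain_eq]
  refine sup_le ?_ (csSup_le' ?_)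
  · exact le_trans (le_chain_self 0) (le_csSup (bddAbove_image_Iio _ o) ⟨0, ho.pos, rfl⟩)
  · rintro x ⟨j, hj, rfl⟩
    exact le_trans (chain_step (lt_add_one j))
      (le_csSup (bddAbove_image_Iio _ o) ⟨j + 1, ho.succ_lt hj, rfl⟩)

end chainprops

lemma small_of_mk_le {s : Set Ordinal.{0}} {c : Cardinal.{0}}
    (h : #↥s ≤ Cardinal.lift.{1} c) : Small.{0} ↥s := by
  rw [← mk_out c, ← mk_uLift] at h
  obtain ⟨f⟩ := (Cardinal.le_def _ _).1 h
  exact small_of_injective f.injective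

lemma sSup_lt_ord' {θ : Cardinal.{0}} (ht : θ.IsRegular) {s : Set Ordinal.{0}}
    (hs : #↥s < Cardinal.lift.{1} θ) (h : ∀ x ∈ s, x < θ.ord) : sSup s < θ.ord := by
  have hsm : Small.{0} ↥s := small_of_mk_le hs.le
  have hrange : Set.range (fun x : Shrink ↥s => ((equivShrink ↥s).symm x : Ordinal)) = s := by
    ext x; simp only [Set.mem_range]
    constructor
    · rintro ⟨y, rfl⟩; exact ((equivShrink ↥s).symm y).2
    · intro hx; exact ⟨equivShrink ↥s ⟨x, hx⟩, by simp⟩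
  have hss : sSup s = ⨆ x : Shrink ↥s, ((equivShrink ↥s).symm x : Ordinal) := by
    rw [iSup, hrange]
  rw [hss]
  apply Cardinal.iSup_lt_ord_of_isRegular ht
  · rw [← Cardinal.lift_lt.{_,1}, lift_mk_shrink' ↥s]; simpa using hs
  · intro i; exact h _ ((equivShrink ↥s).symm i).2

lemma ordAcc_mono {s t : Set Ordinal.{0}} (h : s ⊆ t) {β} (hβ : β ∈ ordAcc s) :
    β ∈ ordAcc t := by
  refine ⟨hβ.1, le_antisymm ?_ (csSup_le' fun x hx => hx.2.le)⟩
  calc β = sSup (s ∩ Set.Iio β) := hβ.2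
    _ ≤ sSup (t ∩ Set.Iio β) :=
      sSup_le_sSup' (Set.inter_subset_inter_left _ h) ⟨β, fun x hx => hx.2.le⟩

/-- The master chain construction. -/
lemma master {θ : Cardinal.{0}} (ht : θ.IsRegular)
    {ι : Type 1} [Small.{0} ι] (E : ι → Set Ordinal.{0}) (hE : ∀ j, isClub (E j) θ.ord)
    (hι : #ι < Cardinal.lift.{1} θ)
    {o : Ordinal.{0}} (ho : Order.IsSuccLimit o) (hoθ : o.card < θ)
    {β : Ordinal.{0}} (hβ : β < θ.ord) :
    ∃ δ, β < δ ∧ δ < θ.ord ∧ (∀ j, δ ∈ ordAcc (E j)) ∧ δ.cof = o.cof := by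
  classical
  have hθlim : Order.IsSuccLimit θ.ord := Cardinal.isSuccLimit_ord ht.aleph0_le
  set eCh : ι → Ordinal → Ordinal :=
    fun j γ => if h : γ < θ.ord then ((hE j).2.1 γ h).choose else 0 with heCh
  have heChSpec : ∀ j γ, γ < θ.ord → eCh j γ ∈ E j ∧ γ ≤ eCh j γ := by
    intro j γ h
    rw [heCh]; simp only [h, dif_pos]
    obtain ⟨h1, h2⟩ := ((hE j).2.1 γ h).choose_spec
    exact ⟨h1, h2⟩
  set Esup : Ordinal → Ordinal := fun γ => sSup (Set.range (fun j => eCh j γ)) with hEsup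
  have hEsuplt : ∀ γ < θ.ord, Esup γ < θ.ord := by
    intro γ hγ
    apply sSup_lt_ord' ht
    · exact lt_of_le_of_lt mk_range_le hι
    · rintro x ⟨j, rfl⟩
      exact (hE j).1 (heChSpec j γ hγ).1
  have hEsupge : ∀ j (γ : Ordinal), eCh j γ ≤ Esup γ :=
    fun j γ => le_csSup Ordinal.bddAbove_of_small ⟨j, rfl⟩
  set N : Ordinal → Ordinal := fun γ => (Esup γ ⊔ γ) + 1 with hNdef
  have hN : ∀ γ, γ < N γ := fun γ => lt_of_le_of_lt le_sup_right (lt_add_one _)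
  have hNθ : ∀ γ < θ.ord, N γ < θ.ord := by
    intro γ hγ
    exact hθlim.succ_lt (sup_lt_iff.2 ⟨hEsuplt γ hγ, hγ⟩)
  set f : Ordinal → Ordinal := chain N (β + 1) with hfdef
  have hmono : StrictMono f := chain_strictMono hN
  have hbf : ∀ i, β + 1 ≤ f i := fun i => le_chain_self i
  have hflt : ∀ i, i ≤ o → f i < θ.ord := by
    intro i
    induction i using Ordinal.induction with
    | h i IH =>
      intro hio
      rw [hfdef, chain_eq]
      apply sup_lt_iff.2
      constructor
      · exact hθlim.succ_lt hβ
      · apply sSup_lt_ord' ht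
        · refine lt_of_le_of_lt mk_image_le ?_
          rw [Ordinal.mk_Iio_ordinal, Cardinal.lift_lt]
          exact lt_of_le_of_lt (Ordinal.card_le_card hio) hoθ
        · rintro x ⟨j, hj, rfl⟩
          exact hNθ _ (IH j hj (le_of_lt (lt_of_lt_of_le hj hio)))
  refine ⟨f o, lt_of_lt_of_le (lt_add_one β) (hbf o), hflt o le_rfl, ?_, ?_⟩
  · intro j
    have hpos : 0 < f o := lt_of_lt_of_le (lt_of_le_of_lt (zero_le (a := β)) (lt_add_one β)) (hbf o)
    refine ⟨hpos, le_antisymm ?_ (csSup_le' fun x hx => hx.2.le)⟩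
    have key : ∀ i, i < o → f i ≤ sSup (E j ∩ Set.Iio (f o)) := by
      intro i hio
      have hfi : f i < θ.ord := hflt i hio.le
      have h1 := heChSpec j (f i) hfi
      have h2 : eCh j (f i) < f o := by
        have : eCh j (f i) < N (f i) :=
          lt_of_le_of_lt (le_trans (hEsupge j (f i)) le_sup_left) (lt_add_one _)
        exact lt_of_lt_of_le this
          (le_trans (chain_step (lt_add_one i)) ((hmono.monotone (ho.succ_lt hio).le)))
      exact le_trans h1.2 (le_csSup ⟨f o, fun x hx => hx.2.le⟩ ⟨h1.1, h2⟩)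
    calc f o ≤ sSup (f '' Set.Iio o) := chain_limit_le_sSup ho
      _ ≤ sSup (E j ∩ Set.Iio (f o)) := csSup_le' (by rintro x ⟨i, hio, rfl⟩; exact key i hio)
  · rw [hfdef]
    exact Ordinal.cof_map_of_isNormal (chain_isNormal hN) ho

lemma isClub_Iio {t : Ordinal.{0}} : isClub (Set.Iio t) t :=
  ⟨le_refl _, fun β hβ => ⟨β, hβ, le_rfl⟩, fun β hβ _ => hβ⟩

/-- intersection of fewer than `θ` clubs (with the base `Iio θ.ord`) is a club -/
lemma isClub_iInter {θ : Cardinal.{0}} (ht : θ.IsRegular) (hθ : ℵ₀ < θ)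
    {I : Set Ordinal.{0}} (hI : #↥I < Cardinal.lift.{1} θ)
    {Es : Ordinal.{0} → Set Ordinal.{0}} (hEs : ∀ j ∈ I, isClub (Es j) θ.ord) :
    isClub (Set.Iio θ.ord ∩ ⋂ j ∈ I, Es j) θ.ord := by
  haveI : Small.{0} ↥I := small_of_mk_le hI.le
  refine ⟨Set.inter_subset_left, ?_, ?_⟩
  · intro β hβ
    obtain ⟨δ, hβδ, hδθ, hacc, -⟩ := master ht (ι := ↥I) (fun j => Es j)
      (fun j => hEs j j.2) hI Ordinal.isSuccLimit_omega0 (by simpa using hθ) hβ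
    refine ⟨δ, ⟨hδθ, ?_⟩, hβδ.le⟩
    rw [Set.mem_iInter₂]
    exact fun j hj => (hEs j hj).2.2 δ hδθ (hacc ⟨j, hj⟩)
  · intro β hβ haccβ
    refine ⟨hβ, ?_⟩
    rw [Set.mem_iInter₂]
    intro j hj
    exact (hEs j hj).2.2 β hβ (ordAcc_mono (fun x hx => Set.mem_iInter₂.1 hx.2 j hj) haccβ)

lemma isClub_inter_pair {θ : Cardinal.{0}} (ht : θ.IsRegular) (hθ : ℵ₀ < θ)
    {A B : Set Ordinal.{0}} (hA : isClub A θ.ord) (hB : isClub B θ.ord) :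
    isClub (A ∩ B) θ.ord := by
  refine ⟨fun x hx => hA.1 hx.1, ?_, ?_⟩
  · intro β hβ
    have hfam : ∀ b : ULift.{1} Bool, isClub (if b.down then A else B) θ.ord := by
      rintro ⟨b⟩; cases b
      · simpa using hB
      · simpa using hA
    have hcard : #(ULift.{1} Bool) < Cardinal.lift.{1} θ := by
      have h2 : #(ULift.{1} Bool) < ℵ₀ := by
        simp only [Cardinal.mk_fintype, Fintype.card_ulift, Fintype.card_bool]
        exact Cardinal.nat_lt_aleph0 2
      have h3 : (ℵ₀ : Cardinal.{1}) ≤ Cardinal.lift.{1} θ := by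
        rw [← Cardinal.lift_aleph0.{1,0}, Cardinal.lift_le]; exact hθ.le
      exact h2.trans_le h3
    obtain ⟨δ, hβδ, hδθ, hacc, -⟩ := master ht (ι := ULift.{1} Bool)
      (fun b => if b.down then A else B) hfam hcard Ordinal.isSuccLimit_omega0
      (by simpa using hθ) hβ
    refine ⟨δ, ⟨?_, ?_⟩, hβδ.le⟩
    · have := hacc ⟨true⟩; simp only [if_true] at this
      exact hA.2.2 δ hδθ this
    · have := hacc ⟨false⟩; simp only [if_false] at this
      exact hB.2.2 δ hδθ this
  · intro β hβ haccβ
    exact ⟨hA.2.2 β hβ (ordAcc_mono Set.inter_subset_left haccβ),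
      hB.2.2 β hβ (ordAcc_mono Set.inter_subset_right haccβ)⟩

/-- meet a club with accumulation points of another club at cofinality σ -/
lemma stat_meet {θ σ : Cardinal.{0}} (ht : θ.IsRegular) (hs : σ.IsRegular)
    (hsig : ℵ₀ ≤ σ) (hσθ : σ < θ)
    {X D : Set Ordinal.{0}} (hX : isClub X θ.ord) (hD : isClub D θ.ord) :
    ∃ δ, δ < θ.ord ∧ δ.cof = σ ∧ δ ∈ ordAcc X ∧ δ ∈ D := by
  have hfam : ∀ b : ULift.{1} Bool, isClub (if b.down then X else D) θ.ord := by
    rintro ⟨b⟩; cases b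
    · simpa using hD
    · simpa using hX
  have hcard : #(ULift.{1} Bool) < Cardinal.lift.{1} θ := by
    have h2 : #(ULift.{1} Bool) < ℵ₀ := by
      simp only [Cardinal.mk_fintype, Fintype.card_ulift, Fintype.card_bool]
      exact Cardinal.nat_lt_aleph0 2
    have h3 : (ℵ₀ : Cardinal.{1}) ≤ Cardinal.lift.{1} θ := by
      rw [← Cardinal.lift_aleph0.{1,0}, Cardinal.lift_le]
      exact (lt_of_le_of_lt hsig hσθ).le
    exact h2.trans_le h3
  obtain ⟨δ, -, hδθ, hacc, hcof⟩ := master ht (ι := ULift.{1} Bool)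
    (fun b => if b.down then X else D) hfam hcard (Cardinal.isSuccLimit_ord hsig)
    (by rwa [Cardinal.card_ord]) ht.ord_pos
  refine ⟨δ, hδθ, by rwa [hs.cof_eq] at hcof, ?_, ?_⟩
  · have := hacc ⟨true⟩; simpa using this
  · have := hacc ⟨false⟩; simp only [if_false] at this
    exact hD.2.2 δ hδθ this

/-- iterated intersection sequence of clubs -/
def iterE (base : Set Ordinal.{0}) (F : Set Ordinal.{0} → Set Ordinal.{0}) :
    Ordinal.{0} → Set Ordinal.{0} :=
  lt_wf.fix (fun i rec => base ∩ ⋂ j : Set.Iio i, F (rec j j.2))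

lemma iterE_eq (base F) (i : Ordinal.{0}) :
    iterE base F i = base ∩ ⋂ j : Set.Iio i, F (iterE base F j) := by
  have := lt_wf.fix_eq (C := fun _ => Set Ordinal.{0})
    (fun i rec => base ∩ ⋂ j : Set.Iio i, F (rec j j.2)) i
  rw [iterE, this]

lemma iterE_anti {base F} {j i : Ordinal.{0}} (h : j ≤ i) :
    iterE base F i ⊆ iterE base F j := by
  rw [iterE_eq base F i, iterE_eq base F j]
  refine Set.inter_subset_inter_right _ ?_
  intro x hx
  simp only [Set.mem_iInter] at hx ⊢
  exact fun k => hx ⟨k.1, lt_of_lt_of_le k.2 h⟩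

lemma iterE_succ_sub {base F} {j : Ordinal.{0}} :
    iterE base F (j + 1) ⊆ F (iterE base F j) := by
  rw [iterE_eq]
  intro x hx
  exact Set.mem_iInter.1 hx.2 ⟨j, lt_add_one j⟩

lemma exists_orderIso_Iio (s : Set Ordinal.{0}) [Small.{0} ↥s] :
    ∃ α : Ordinal.{0}, Cardinal.lift.{1} α.card = #↥s ∧ Nonempty (↥s ≃o ↥(Set.Iio α)) := by
  classical
  set t := Shrink ↥s
  let e : t ≃ ↥s := (equivShrink ↥s).symm
  let r : t → t → Prop := fun a b => (e a : Ordinal) < (e b : Ordinal)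
  have remb : r ↪r ((· < ·) : Ordinal → Ordinal → Prop) :=
    ⟨⟨fun a => (e a : Ordinal), fun a b hab => by
        apply e.injective; exact Subtype.ext hab⟩, Iff.rfl⟩
  haveI : IsWellOrder t r := remb.isWellOrder
  set α := Ordinal.type r with hα
  have i1 := (Ordinal.typein r).subrelIso
  have htop : (Ordinal.typein r).top = α := rfl
  rw [htop] at i1
  have i3 : r ≃r ((· < ·) : ↥s → ↥s → Prop) := ⟨e, Iff.rfl⟩
  have i2 : ↥(Set.Iio α) ≃o ↥s := OrderIso.ofRelIsoLT (i1.trans i3)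
  refine ⟨α, ?_, ⟨i2.symm⟩⟩
  have : #↥(Set.Iio α) = #↥s := Cardinal.mk_congr i2.toEquiv
  rwa [Ordinal.mk_Iio_ordinal] at this

lemma otp_lt_ord {s : Set Ordinal.{0}} {c κ : Cardinal.{0}}
    (h : #↥s ≤ Cardinal.lift.{1} c) (hcκ : c < κ) : otp s < κ.ord := by
  haveI := small_of_mk_le h
  obtain ⟨α, hcard, hiso⟩ := exists_orderIso_Iio s
  have h1 : otp s ≤ α := csInf_le' hiso
  refine h1.trans_lt ?_
  rw [Cardinal.lt_ord]
  have : Cardinal.lift.{1} α.card ≤ Cardinal.lift.{1} c := hcard ▸ h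
  exact (Cardinal.lift_le.1 this).trans_lt hcκ


lemma exists_cofinal_set (δ : Ordinal.{0}) :
    ∃ A : Set Ordinal.{0}, A ⊆ Set.Iio δ ∧ (∀ a < δ, ∃ b ∈ A, a ≤ b) ∧
      #↥A ≤ Cardinal.lift.{1} δ.cof := by
  obtain ⟨ι, g, hg, hcard⟩ := Ordinal.exists_lsub_cof δ
  refine ⟨Set.range g, ?_, ?_, ?_⟩
  · rintro x ⟨i, rfl⟩; exact hg ▸ Ordinal.lt_lsub g i
  · intro a ha
    rw [← hg] at ha
    obtain ⟨i, hi⟩ := Ordinal.lt_lsub_iff.1 ha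
    exact ⟨g i, ⟨i, rfl⟩, hi⟩
  · rw [← hcard]; simpa using Cardinal.mk_range_le_lift (f := g)


/-- Claim 2.2(1): for regular `θ > κ > σ ≥ ℵ₀` there is a
stationary `S ⊆ {δ < θ : cf δ = σ}` with an unbounded-set sequence
`⟨C_δ : δ ∈ S⟩`, each `C_δ` of order type `< κ`, guessing clubs of `θ`. -/
theorem stmt12 (theta kappa sigma : Cardinal.{0})
    (ht : theta.IsRegular) (hk : kappa.IsRegular) (hs : sigma.IsRegular)
    (hsig : ℵ₀ ≤ sigma) (h1 : sigma < kappa) (h2 : kappa < theta) :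
    ∃ S : Set Ordinal.{0}, S ⊆ {δ : Ordinal | δ < theta.ord ∧ δ.cof = sigma} ∧
      isStationary S theta.ord ∧
      ∃ C : Ordinal.{0} → Set Ordinal.{0},
        (∀ δ ∈ S, C δ ⊆ Set.Iio δ ∧ (∀ α < δ, ∃ β ∈ C δ, α ≤ β) ∧
          otp (C δ) < kappa.ord) ∧
        ∀ E : Set Ordinal, isClub E theta.ord → ∃ δ ∈ S, C δ ⊆ E := by
  classical
  by_contra hcon
  push_neg at hcon
  set θo := theta.ord with hθodef
  have hθℵ : ℵ₀ < theta := lt_of_le_of_lt hsig (h1.trans h2)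
  have hσθ : sigma < theta := h1.trans h2
  have hκlim : Order.IsSuccLimit kappa.ord := Cardinal.isSuccLimit_ord hk.aleph0_le
  set A : Ordinal.{0} → Set Ordinal.{0} := fun δ => (exists_cofinal_set δ).choose with hAdef
  have hA : ∀ δ : Ordinal.{0}, A δ ⊆ Set.Iio δ ∧ (∀ a < δ, ∃ b ∈ A δ, a ≤ b) ∧
      #↥(A δ) ≤ Cardinal.lift.{1} δ.cof := fun δ => (exists_cofinal_set δ).choose_spec
  set S₀ : Set Ordinal.{0} := {δ : Ordinal | δ < θo ∧ δ.cof = sigma} with hS₀def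
  set Cc : Set Ordinal.{0} → Ordinal.{0} → Set Ordinal.{0} :=
    fun X δ => {b | 0 < b ∧ b ∈ X ∧ ∃ a ∈ A δ, b = sSup (X ∩ Set.Iio a)} with hCcdef
  have valid : ∀ X, isClub X θo → ∀ δ, δ ∈ S₀ → δ ∈ ordAcc X →
      Cc X δ ⊆ Set.Iio δ ∧ (∀ a < δ, ∃ b ∈ Cc X δ, a ≤ b) ∧ otp (Cc X δ) < kappa.ord := by
    intro X hX δ hδS hδacc
    obtain ⟨hδθ, hδcof⟩ := hδS
    have hδlim : Order.IsSuccLimit δ := Ordinal.aleph0_le_cof.1 (hδcof ▸ hsig)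
    obtain ⟨hA1, hA2, hA3⟩ := hA δ
    have hsub : Cc X δ ⊆ Set.Iio δ := by
      rintro b ⟨hb0, hbX, a, haA, rfl⟩
      exact lt_of_le_of_lt (csSup_le' fun x (hx : x ∈ X ∩ Set.Iio a) => hx.2.le) (hA1 haA)
    refine ⟨hsub, ?_, ?_⟩
    · intro a0 ha0
      have hne : ∃ e ∈ X ∩ Set.Iio δ, a0 < e := by
        by_contra hcon2
        push_neg at hcon2
        have hle : sSup (X ∩ Set.Iio δ) ≤ a0 := csSup_le' hcon2
        rw [← hδacc.2] at hle
        exact absurd ha0 (not_lt.2 hle)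
      obtain ⟨e, heX, ha0e⟩ := hne
      obtain ⟨a, haA, hea⟩ := hA2 (e + 1) (hδlim.succ_lt heX.2)
      have hlt : e < a := lt_of_lt_of_le (lt_add_one e) hea
      have hbdd : BddAbove (X ∩ Set.Iio a) := ⟨a, fun x hx => hx.2.le⟩
      have hbe : e ≤ sSup (X ∩ Set.Iio a) := le_csSup hbdd ⟨heX.1, hlt⟩
      refine ⟨sSup (X ∩ Set.Iio a),
        ⟨lt_of_le_of_lt (zero_le (a := a0)) (lt_of_lt_of_le ha0e hbe), ?_, a, haA, rfl⟩,
        le_of_lt (lt_of_lt_of_le ha0e hbe)⟩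
      apply sSup_mem_club hX Set.inter_subset_left ⟨e, heX.1, hlt⟩
      exact lt_trans (lt_of_le_of_lt (csSup_le' fun x (hx : x ∈ X ∩ Set.Iio a) => hx.2.le) (hA1 haA)) hδθ
    · have himg : Cc X δ ⊆ (fun a => sSup (X ∩ Set.Iio a)) '' (A δ) := by
        rintro b ⟨hb0, hbX, a, haA, rfl⟩
        exact ⟨a, haA, rfl⟩
      have hmk : #↥(Cc X δ) ≤ Cardinal.lift.{1} sigma := by
        refine le_trans (Cardinal.mk_le_mk_of_subset himg) (le_trans Cardinal.mk_image_le ?_)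
        rwa [hδcof] at hA3
      exact otp_lt_ord hmk h1
  have hFex : ∀ X, isClub X θo → ∃ Y, isClub Y θo ∧ Y ⊆ X ∧
      ∀ δ ∈ S₀ ∩ ordAcc X, ¬ Cc X δ ⊆ Y := by
    intro X hX
    have hstatX : isStationary (S₀ ∩ ordAcc X) θo := by
      intro D hD
      obtain ⟨δ, hδθ, hδcof, hδacc, hδD⟩ := stat_meet ht hs hsig hσθ hX hD
      exact ⟨δ, ⟨⟨hδθ, hδcof⟩, hδacc⟩, hδD⟩
    have hsubS : S₀ ∩ ordAcc X ⊆ {δ : Ordinal | δ < θo ∧ δ.cof = sigma} := fun δ hδ => hδ.1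
    obtain ⟨E, hE, hEfail⟩ := hcon (S₀ ∩ ordAcc X) hsubS hstatX (Cc X)
      (fun δ hδ => valid X hX δ hδ.1 hδ.2)
    refine ⟨E ∩ X, isClub_inter_pair ht hθℵ hE hX, Set.inter_subset_right, ?_⟩
    intro δ hδ hsub2
    exact hEfail δ hδ (hsub2.trans Set.inter_subset_left)
  set F : Set Ordinal.{0} → Set Ordinal.{0} :=
    fun X => if h : isClub X θo then (hFex X h).choose else Set.univ with hFdef
  have hFspec : ∀ X (h : isClub X θo), isClub (F X) θo ∧ F X ⊆ X ∧
      ∀ δ ∈ S₀ ∩ ordAcc X, ¬ Cc X δ ⊆ F X := by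
    intro X h
    have hc := (hFex X h).choose_spec
    rw [hFdef]
    simpa only [dif_pos h] using hc
  set Es : Ordinal.{0} → Set Ordinal.{0} := iterE (Set.Iio θo) F with hEsdef
  have hclub : ∀ i, i ≤ kappa.ord → isClub (Es i) θo := by
    intro i
    induction i using Ordinal.induction with
    | h i IH =>
      intro hio
      have hrw : Es i = Set.Iio θo ∩ ⋂ j ∈ Set.Iio i, F (Es j) := by
        rw [hEsdef, iterE_eq]
        congr 1
        rw [Set.iInter_coe_set]
      rw [hrw]
      apply isClub_iInter ht hθℵ (I := Set.Iio i) ?hI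
      · intro j hj
        exact (hFspec _ (IH j hj (le_of_lt (lt_of_lt_of_le hj hio)))).1
      case hI =>
        rw [Ordinal.mk_Iio_ordinal]
        calc Cardinal.lift.{1} i.card ≤ Cardinal.lift.{1} kappa := by
              rw [Cardinal.lift_le]
              exact le_trans (Ordinal.card_le_card hio) (le_of_eq (Cardinal.card_ord kappa))
          _ < Cardinal.lift.{1} theta := by rw [Cardinal.lift_lt]; exact h2
  have hanti : ∀ {j i : Ordinal.{0}}, j ≤ i → Es i ⊆ Es j := fun h => iterE_anti h
  have hEstar := hclub kappa.ord le_rfl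
  obtain ⟨δ, hδθ, hδcof, hδaccstar, -⟩ := stat_meet ht hs hsig hσθ hEstar isClub_Iio
  have hδS₀ : δ ∈ S₀ := ⟨hδθ, hδcof⟩
  have hacci : ∀ i, i ≤ kappa.ord → δ ∈ ordAcc (Es i) :=
    fun i hi => ordAcc_mono (hanti hi) hδaccstar
  have hstab : ∀ a : Ordinal.{0}, ∃ i, i < kappa.ord ∧
      ∀ i', i ≤ i' → i' < kappa.ord →
        sSup (Es i' ∩ Set.Iio a) = sSup (Es i ∩ Set.Iio a) := by
    intro a
    set g : Ordinal.{0} → Ordinal.{0} := fun i => sSup (Es i ∩ Set.Iio a) with hgdef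
    have hganti : ∀ {i i' : Ordinal.{0}}, i ≤ i' → g i' ≤ g i := by
      intro i i' h
      exact sSup_le_sSup' (Set.inter_subset_inter_left _ (hanti h)) ⟨a, fun x hx => hx.2.le⟩
    have hne : (g '' Set.Iio kappa.ord).Nonempty := ⟨g 0, 0, hk.ord_pos, rfl⟩
    obtain ⟨i, hiκ, hival⟩ := csInf_mem hne
    refine ⟨i, hiκ, ?_⟩
    intro i' hii' hi'κ
    refine le_antisymm (hganti hii') ?_
    show g i ≤ g i'
    rw [hival]
    exact csInf_le' ⟨i', hi'κ, rfl⟩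
  set jf : Ordinal.{0} → Ordinal.{0} := fun a => (hstab a).choose with hjfdef
  have hjf1 : ∀ a, jf a < kappa.ord := fun a => (hstab a).choose_spec.1
  have hjf2 : ∀ a i', jf a ≤ i' → i' < kappa.ord →
      sSup (Es i' ∩ Set.Iio a) = sSup (Es (jf a) ∩ Set.Iio a) :=
    fun a => (hstab a).choose_spec.2
  have hAcard : #↥(A δ) ≤ Cardinal.lift.{1} sigma := by
    rw [← hδcof]; exact (hA δ).2.2
  have hsmallimg : #↥(jf '' A δ) ≤ Cardinal.lift.{1} sigma :=
    le_trans Cardinal.mk_image_le hAcard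
  set i0 := sSup (jf '' A δ) with hi0def
  have hi0 : i0 < kappa.ord := by
    refine sSup_lt_ord' hk (lt_of_le_of_lt hsmallimg ?_) ?_
    · rw [Cardinal.lift_lt]; exact h1
    · rintro x ⟨a, ha, rfl⟩; exact hjf1 a
  have hi0le : ∀ a ∈ A δ, jf a ≤ i0 := by
    intro a ha
    have : Small.{0} ↥(jf '' A δ) := small_of_mk_le hsmallimg
    exact le_csSup Ordinal.bddAbove_of_small ⟨a, ha, rfl⟩
  have hi1 : i0 + 1 < kappa.ord := hκlim.succ_lt hi0
  have hclub0 : isClub (Es i0) θo := hclub i0 hi0.le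
  have hfail := (hFspec (Es i0) hclub0).2.2 δ ⟨hδS₀, hacci i0 hi0.le⟩
  apply hfail
  intro b hb
  obtain ⟨hb0, hbX, a, haA, hbeq⟩ := hb
  have he1 : sSup (Es i0 ∩ Set.Iio a) = sSup (Es (jf a) ∩ Set.Iio a) :=
    hjf2 a i0 (hi0le a haA) hi0
  have he2 : sSup (Es (i0 + 1) ∩ Set.Iio a) = sSup (Es (jf a) ∩ Set.Iio a) :=
    hjf2 a (i0 + 1) (le_trans (hi0le a haA) (le_of_lt (lt_add_one i0))) hi1
  have hbeq' : b = sSup (Es (i0 + 1) ∩ Set.Iio a) := by rw [hbeq, he1, ← he2]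
  have hbmem : b ∈ Es (i0 + 1) := by
    rcases Set.eq_empty_or_nonempty (Es (i0 + 1) ∩ Set.Iio a) with hemp | hne
    · exfalso
      rw [hbeq', hemp] at hb0
      simp at hb0
    · rw [hbeq']
      apply sSup_mem_club (hclub (i0 + 1) hi1.le) Set.inter_subset_left hne
      rw [← hbeq']
      exact hclub0.1 hbX
  exact iterE_succ_sub hbmem
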